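/- Let k be an infinite field and A a finite-dimensional associative unital k-algebra of dimension n with basis e₁, …, eₙ, and let d be the degree of algebraicity of A, i.e. the degree of the minimal polynomial of the generic element α = t₁e₁ + ⋯ + tₙeₙ ∈ A ⊗_k k(t₁, …, tₙ) over k(t₁, …, tₙ). Then d = n if and only if A is monogenic, i.e. there exists x ∈ A such that the k-subalgebra generated by x is all of A. -/

import Mathlib

/-!
An element `x` of an `F`-algebra `B` with basis `e : Fin n → B` generates `B` iff its powers
`1, x, …, x ^ (n - 1)` form a basis, iff the determinant `e.det (x ^ ·)` is nonzero, iff the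
minimal polynomial of `x` has degree `n`. For the generic element `∑ tᵢ ⊗ eᵢ` this determinant
is a polynomial `P ∈ k[t₁, …, tₙ]` (mapped into `K = k(t₁, …, tₙ)`), and its value at the
coordinates of any `x ∈ A` is the determinant of the powers of `x`. Hence `d = n` iff `P ≠ 0`,
and since `k` is infinite this happens iff `P` does not vanish at some point of `kⁿ`, i.e. iff
some `x ∈ A` generates `A`.
-/

open scoped TensorProduct
open Module

universe u v w

section Monogenic

variable {F B : Type*} [Field F] [Ring B] [Algebra F B]

theorem adjoin_singleton_eq_top_iff_natDegree_minpoly_eq_finrank [FiniteDimensional F B]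
    (x : B) : Algebra.adjoin F {x} = ⊤ ↔ (minpoly F x).natDegree = finrank F B := by
  have hli := linearIndependent_pow (K := F) x
  have hspan : Submodule.span F (Set.range fun i : Fin (minpoly F x).natDegree => x ^ (i : ℕ)) =
      Subalgebra.toSubmodule (Algebra.adjoin F {x}) := by
    rw [← Submodule.span_range_natDegree_eq_adjoin (minpoly.monic (.of_finite F x))
      (minpoly.aeval F x)]
    congr 1
    ext y
    simp [Fin.exists_iff]
  rw [← Algebra.toSubmodule_eq_top, ← hspan]
  refine ⟨fun h => ?_, fun h => hli.span_eq_top_of_card_eq_finrank' (by simpa using h)⟩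
  have hcard := finrank_span_eq_card hli
  rw [h, finrank_top, Fintype.card_fin] at hcard
  exact hcard.symm

theorem adjoin_singleton_eq_top_iff_det_pow_ne_zero {n : ℕ} (e : Basis (Fin n) F B) (x : B) :
    Algebra.adjoin F {x} = ⊤ ↔ e.det (fun i : Fin n => x ^ (i : ℕ)) ≠ 0 := by
  have : FiniteDimensional F B := .of_basis e
  have hn : finrank F B = n := by simp [finrank_eq_card_basis e]
  rw [← isUnit_iff_ne_zero, ← e.is_basis_iff_det]
  constructor
  · intro h
    rw [adjoin_singleton_eq_top_iff_natDegree_minpoly_eq_finrank, hn] at h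
    have hli : LinearIndependent F fun i : Fin n => x ^ (i : ℕ) :=
      (linearIndependent_pow x).comp (Fin.cast h.symm) (Fin.cast_injective _)
    exact ⟨hli, hli.span_eq_top_of_card_eq_finrank' (by simp [hn])⟩
  · rintro ⟨-, hspan⟩
    refine Algebra.toSubmodule_eq_top.mp (top_unique (hspan.ge.trans (Submodule.span_le.mpr ?_)))
    rintro _ ⟨i, rfl⟩
    exact (Algebra.adjoin F {x}).pow_mem (Algebra.self_mem_adjoin_singleton F x) _

theorem natDegree_minpoly_eq_iff_det_pow_ne_zero {n : ℕ} (e : Basis (Fin n) F B) (x : B) :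
    (minpoly F x).natDegree = n ↔ e.det (fun i : Fin n => x ^ (i : ℕ)) ≠ 0 := by
  have : FiniteDimensional F B := .of_basis e
  rw [← adjoin_singleton_eq_top_iff_det_pow_ne_zero e,
    adjoin_singleton_eq_top_iff_natDegree_minpoly_eq_finrank, finrank_eq_card_basis e,
    Fintype.card_fin]

end Monogenic

theorem Module.Basis.det_comp_eq_map_det {ι R R' M M' : Type*} [Fintype ι] [DecidableEq ι]
    [CommRing R] [CommRing R'] [AddCommGroup M] [Module R M] [AddCommGroup M'] [Module R' M']
    (b : Basis ι R M) (b' : Basis ι R' M') (f : R →+* R') (g : M → M')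
    (hg : ∀ y i, b'.repr (g y) i = f (b.repr y i)) (v : ι → M) :
    b'.det (g ∘ v) = f (b.det v) := by
  rw [Basis.det_apply, Basis.det_apply, RingHom.map_det]
  congr 1
  ext i j
  simp [Basis.toMatrix_apply, hg]

section Generic

variable {k : Type*} [CommRing k] {A : Type*} [Ring A] [Algebra k A]
  {S T : Type*} [CommRing S] [Algebra k S] [CommRing T] [Algebra k T]

theorem Module.Basis.baseChange_repr_map {ι : Type*} (e : Basis ι k A) (f : S →ₐ[k] T)
    (y : S ⊗[k] A) (i : ι) :
    (e.baseChange T).repr (Algebra.TensorProduct.map f (AlgHom.id k A) y) i =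
      f ((e.baseChange S).repr y i) := by
  induction y using TensorProduct.induction_on with
  | zero => simp
  | tmul s a => simp [Algebra.TensorProduct.map_tmul]
  | add y z hy hz => simp [hy, hz]

theorem Module.Basis.repr_lid_map {ι : Type*} (e : Basis ι k A) (f : S →ₐ[k] k)
    (y : S ⊗[k] A) (i : ι) :
    e.repr (Algebra.TensorProduct.lid k A (Algebra.TensorProduct.map f (AlgHom.id k A) y)) i =
      f ((e.baseChange S).repr y i) := by
  induction y using TensorProduct.induction_on with
  | zero => simp
  | tmul s a => simp [Algebra.TensorProduct.map_tmul, mul_comm]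
  | add y z hy hz => simp [hy, hz]

noncomputable def genericElement {ι : Type*} [Fintype ι] (e : Basis ι k A) :
    MvPolynomial ι k ⊗[k] A :=
  ∑ i, MvPolynomial.X i ⊗ₜ e i

theorem lid_map_aeval_genericElement {ι : Type*} [Fintype ι] (e : Basis ι k A) (x : A) :
    Algebra.TensorProduct.lid k A (Algebra.TensorProduct.map (MvPolynomial.aeval (e.repr x))
      (AlgHom.id k A) (genericElement e)) = x := by
  simp [genericElement, Algebra.TensorProduct.map_tmul, e.sum_repr]

noncomputable def genericPowDet {n : ℕ} (e : Basis (Fin n) k A) : MvPolynomial (Fin n) k :=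
  (e.baseChange _).det fun i : Fin n => genericElement e ^ (i : ℕ)

theorem det_pow_map_genericElement {n : ℕ} (e : Basis (Fin n) k A)
    (f : MvPolynomial (Fin n) k →ₐ[k] T) :
    (e.baseChange T).det (fun i : Fin n =>
      Algebra.TensorProduct.map f (AlgHom.id k A) (genericElement e) ^ (i : ℕ)) =
      f (genericPowDet e) := by
  rw [genericPowDet]
  simpa [Function.comp_def] using (e.baseChange _).det_comp_eq_map_det _ f.toRingHom _
    (e.baseChange_repr_map f) fun i : Fin n => genericElement e ^ (i : ℕ)

theorem det_pow_eq_eval_genericPowDet {n : ℕ} (e : Basis (Fin n) k A) (x : A) :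
    e.det (fun i : Fin n => x ^ (i : ℕ)) = MvPolynomial.eval (e.repr x) (genericPowDet e) := by
  conv_lhs => rw [← lid_map_aeval_genericElement e x]
  rw [genericPowDet, ← MvPolynomial.coe_aeval_eq_eval]
  simpa [Function.comp_def] using (e.baseChange _).det_comp_eq_map_det e
    (MvPolynomial.aeval (e.repr x)).toRingHom _ (e.repr_lid_map _)
    fun i : Fin n => genericElement e ^ (i : ℕ)

end Generic

theorem exists_adjoin_singleton_eq_top_iff_genericPowDet_ne_zero {k A : Type*} [Field k]
    [Infinite k] [Ring A] [Algebra k A] {n : ℕ} (e : Basis (Fin n) k A) :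
    (∃ x : A, Algebra.adjoin k {x} = ⊤) ↔ genericPowDet e ≠ 0 := by
  simp_rw [adjoin_singleton_eq_top_iff_det_pow_ne_zero e, det_pow_eq_eval_genericPowDet]
  constructor
  · rintro ⟨x, hx⟩ h0
    simp [h0] at hx
  · intro h
    obtain ⟨c, hc⟩ : ∃ c, MvPolynomial.eval c (genericPowDet e) ≠ 0 := by
      by_contra! h'
      exact h (MvPolynomial.funext fun c => by simp [h' c])
    exact ⟨e.equivFun.symm c, by rwa [← e.equivFun_apply, e.equivFun.apply_symm_apply]⟩

/-- Over an infinite field `k`, a finite-dimensional `k`-algebra `A` of dimension `n`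
has degree of algebraicity `d = n` if and only if `A` is monogenic, i.e. generated as
a `k`-algebra by a single element. -/
theorem deg_of_algebraicity_eq_dim_iff_monogenic
    {k : Type u} [Field k] [Infinite k] {n : ℕ}
    {A : Type v} [Ring A] [Algebra k A] (e : Module.Basis (Fin n) k A)
    {K : Type w} [Field K] [Algebra (MvPolynomial (Fin n) k) K]
    [IsFractionRing (MvPolynomial (Fin n) k) K]
    [Algebra k K] [IsScalarTower k (MvPolynomial (Fin n) k) K]
    (α : K ⊗[k] A)
    (hα : α = ∑ i, algebraMap (MvPolynomial (Fin n) k) K (MvPolynomial.X i) ⊗ₜ[k] e i)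
    (d : ℕ) (hd : d = (minpoly K α).natDegree) :
    d = n ↔ ∃ x : A, Algebra.adjoin k {x} = ⊤ := by
  have hα' : Algebra.TensorProduct.map (IsScalarTower.toAlgHom k (MvPolynomial (Fin n) k) K)
      (AlgHom.id k A) (genericElement e) = α := by
    simp [hα, genericElement, Algebra.TensorProduct.map_tmul]
  rw [hd, natDegree_minpoly_eq_iff_det_pow_ne_zero (e.baseChange K), ← hα',
    det_pow_map_genericElement, IsScalarTower.coe_toAlgHom',
    map_ne_zero_iff _ (IsFractionRing.injective _ K)]
  exact (exists_adjoin_singleton_eq_top_iff_genericPowDet_ne_zero e).symm
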